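/- Let A be a real m×n matrix with m ≥ n, all rows nonzero, and Ax = b, and let σ > 0 satisfy ‖A v‖ ≥ σ·‖v‖ for all v ∈ ℝ^n. Then for every x_0 ∈ ℝ^n and every k ∈ ℕ, the random Kaczmarz process of length k satisfies E[ ‖x_k − x‖² ] ≤ (1 − σ²/‖A‖_F²)^k · ‖x_0 − x‖². -/

import Mathlib

noncomputable section

/-- The `i`-th row of `A` as a vector in Euclidean space. -/
def rowv {m n : ℕ} (A : Matrix (Fin m) (Fin n) ℝ) (i : Fin m) : EuclideanSpace ℝ (Fin n) :=
  WithLp.toLp 2 (fun j => A i j)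

/-- Matrix-vector multiplication, landing in Euclidean space. -/
def mulV {m n : ℕ} (A : Matrix (Fin m) (Fin n) ℝ) (v : EuclideanSpace ℝ (Fin n)) :
    EuclideanSpace ℝ (Fin m) := WithLp.toLp 2 (fun i => ∑ j, A i j * v j)

/-- The square of the Frobenius norm `‖A‖_F²`. -/
def frobSq {m n : ℕ} (A : Matrix (Fin m) (Fin n) ℝ) : ℝ := ∑ i, ∑ j, (A i j) ^ 2

/-- The operator norm `‖A‖` (ℓ² → ℓ²). -/
def opN {m n : ℕ} (A : Matrix (Fin m) (Fin n) ℝ) : ℝ :=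
  ‖LinearMap.toContinuousLinearMap (Matrix.toEuclideanLin A)‖

/-- Orthogonal projection of `w` onto the hyperplane `{v : ⟨a_i, v⟩ = b_i}`. -/
def proj {m n : ℕ} (A : Matrix (Fin m) (Fin n) ℝ) (b : EuclideanSpace ℝ (Fin m)) (i : Fin m)
    (w : EuclideanSpace ℝ (Fin n)) : EuclideanSpace ℝ (Fin n) :=
  w + ((b i - inner (𝕜 := ℝ) (rowv A i) w) / ‖rowv A i‖ ^ 2) • rowv A i

/-- The Kaczmarz trajectory: `traj A b x0 ω j` is `x_j(ω) = π_{ω_j} ⋯ π_{ω_1} x_0`. -/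
def traj {m n k : ℕ} (A : Matrix (Fin m) (Fin n) ℝ) (b : EuclideanSpace ℝ (Fin m))
    (x0 : EuclideanSpace ℝ (Fin n)) (ω : Fin k → Fin m) : ℕ → EuclideanSpace ℝ (Fin n)
  | 0 => x0
  | j + 1 => if h : j < k then proj A b (ω ⟨j, h⟩) (traj A b x0 ω j) else traj A b x0 ω j

/-- The weight `∏_j ‖a_{ω_j}‖²/‖A‖_F²` of an index sequence `ω` for the random Kaczmarz
process. -/
def wt {m n k : ℕ} (A : Matrix (Fin m) (Fin n) ℝ) (ω : Fin k → Fin m) : ℝ :=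
  ∏ j, ‖rowv A (ω j)‖ ^ 2 / frobSq A

end

/-!
Projecting onto the hyperplane of row `aᵢ` removes exactly the component of the error `w - x`
along `aᵢ`, so `‖πᵢ w - x‖² = ‖w - x‖² - ⟨aᵢ, w - x⟩² / ‖aᵢ‖²`. Averaging with the weights
`‖aᵢ‖² / ‖A‖_F²` turns the subtracted terms into `‖A (w - x)‖² / ‖A‖_F² ≥ σ² ‖w - x‖² / ‖A‖_F²`,
so one step contracts the expected squared error by `1 - σ² / ‖A‖_F²`. Since the weight of an
index sequence factors over its last index, the expectation after `k + 1` steps is the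
expectation after `k` steps of this one-step average, and the bound follows by induction.
-/

open Finset

section Hyperplane

variable {E : Type*} [NormedAddCommGroup E] [InnerProductSpace ℝ E]

lemma norm_sq_mul_norm_add_smul_sub_sq (a w x : E) :
    ‖a‖ ^ 2 * ‖w + ((inner ℝ a x - inner ℝ a w) / ‖a‖ ^ 2) • a - x‖ ^ 2
      = ‖a‖ ^ 2 * ‖w - x‖ ^ 2 - inner ℝ a (w - x) ^ 2 := by
  rcases eq_or_ne a 0 with rfl | ha
  · simp
  have hna : ‖a‖ ≠ 0 := norm_ne_zero_iff.mpr ha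
  have hsplit : w + ((inner ℝ a x - inner ℝ a w) / ‖a‖ ^ 2) • a - x
      = (w - x) - (inner ℝ a (w - x) / ‖a‖ ^ 2) • a := by
    simp only [inner_sub_right, sub_div, sub_smul]
    abel
  rw [hsplit, norm_sub_sq_real, real_inner_smul_right, norm_smul, real_inner_comm,
    Real.norm_eq_abs, mul_pow, sq_abs]
  field_simp
  ring

end Hyperplane

section Kaczmarz

variable {m n : ℕ} (A : Matrix (Fin m) (Fin n) ℝ)

lemma mulV_apply (v : EuclideanSpace ℝ (Fin n)) (i : Fin m) :
    mulV A v i = inner ℝ (rowv A i) v := by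
  simp [mulV, rowv, PiLp.inner_apply, mul_comm]

lemma norm_mulV_sq (v : EuclideanSpace ℝ (Fin n)) :
    ‖mulV A v‖ ^ 2 = ∑ i, inner ℝ (rowv A i) v ^ 2 := by
  simp [EuclideanSpace.norm_sq_eq, mulV_apply]

lemma frobSq_eq_sum_norm_rowv_sq : frobSq A = ∑ i, ‖rowv A i‖ ^ 2 := by
  simp [frobSq, EuclideanSpace.norm_sq_eq, rowv]

lemma frobSq_nonneg : 0 ≤ frobSq A := by
  unfold frobSq
  positivity

lemma norm_mulV_sq_le (v : EuclideanSpace ℝ (Fin n)) :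
    ‖mulV A v‖ ^ 2 ≤ frobSq A * ‖v‖ ^ 2 := by
  rw [norm_mulV_sq, frobSq_eq_sum_norm_rowv_sq, sum_mul]
  gcongr with i
  rw [← mul_pow, ← sq_abs]
  exact pow_le_pow_left₀ (abs_nonneg _) (abs_real_inner_le_norm _ _) 2

lemma sq_le_frobSq_of_le_norm_mulV {σ : ℝ} (hσ : 0 ≤ σ)
    (hlow : ∀ v : EuclideanSpace ℝ (Fin n), σ * ‖v‖ ≤ ‖mulV A v‖)
    {v : EuclideanSpace ℝ (Fin n)} (hv : v ≠ 0) : σ ^ 2 ≤ frobSq A := by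
  have hv2 : 0 < ‖v‖ ^ 2 := by positivity
  refine le_of_mul_le_mul_right ?_ hv2
  calc σ ^ 2 * ‖v‖ ^ 2 = (σ * ‖v‖) ^ 2 := by ring
    _ ≤ ‖mulV A v‖ ^ 2 := pow_le_pow_left₀ (by positivity) (hlow v) 2
    _ ≤ frobSq A * ‖v‖ ^ 2 := norm_mulV_sq_le A v

variable {A} {b : EuclideanSpace ℝ (Fin m)} {x : EuclideanSpace ℝ (Fin n)}

lemma norm_rowv_sq_mul_norm_proj_sub_sq (hAx : mulV A x = b) (i : Fin m)
    (w : EuclideanSpace ℝ (Fin n)) :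
    ‖rowv A i‖ ^ 2 * ‖proj A b i w - x‖ ^ 2
      = ‖rowv A i‖ ^ 2 * ‖w - x‖ ^ 2 - inner ℝ (rowv A i) (w - x) ^ 2 := by
  rw [proj, ← hAx, mulV_apply]
  exact norm_sq_mul_norm_add_smul_sub_sq _ _ _

lemma sum_weighted_norm_proj_sub_sq (hAx : mulV A x = b) (hF : frobSq A ≠ 0)
    (w : EuclideanSpace ℝ (Fin n)) :
    ∑ i, ‖rowv A i‖ ^ 2 / frobSq A * ‖proj A b i w - x‖ ^ 2
      = ‖w - x‖ ^ 2 - ‖mulV A (w - x)‖ ^ 2 / frobSq A := by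
  simp_rw [div_mul_eq_mul_div, norm_rowv_sq_mul_norm_proj_sub_sq hAx, ← sum_div,
    sum_sub_distrib, ← sum_mul, ← frobSq_eq_sum_norm_rowv_sq, ← norm_mulV_sq]
  field_simp

lemma sum_weighted_norm_proj_sub_sq_le (hAx : mulV A x = b) {σ : ℝ} (hσ : 0 ≤ σ)
    (hlow : ∀ v : EuclideanSpace ℝ (Fin n), σ * ‖v‖ ≤ ‖mulV A v‖) (hF : 0 < frobSq A)
    (w : EuclideanSpace ℝ (Fin n)) :
    ∑ i, ‖rowv A i‖ ^ 2 / frobSq A * ‖proj A b i w - x‖ ^ 2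
      ≤ (1 - σ ^ 2 / frobSq A) * ‖w - x‖ ^ 2 := by
  rw [sum_weighted_norm_proj_sub_sq hAx hF.ne']
  have hσe : σ ^ 2 * ‖w - x‖ ^ 2 ≤ ‖mulV A (w - x)‖ ^ 2 := by
    rw [← mul_pow]
    exact pow_le_pow_left₀ (by positivity) (hlow _) 2
  have := div_le_div_of_nonneg_right hσe hF.le
  rw [sub_mul, one_mul, div_mul_eq_mul_div]
  linarith

end Kaczmarz

section Expectation

variable {m n k : ℕ} (A : Matrix (Fin m) (Fin n) ℝ) (b : EuclideanSpace ℝ (Fin m))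
  (x0 : EuclideanSpace ℝ (Fin n))

lemma wt_nonneg (ω : Fin k → Fin m) : 0 ≤ wt A ω :=
  prod_nonneg fun _ _ => div_nonneg (sq_nonneg _) (frobSq_nonneg A)

lemma wt_snoc (ω : Fin k → Fin m) (i : Fin m) :
    wt A (Fin.snoc ω i : Fin (k + 1) → Fin m) = wt A ω * (‖rowv A i‖ ^ 2 / frobSq A) := by
  simp only [wt, Fin.prod_univ_castSucc, Fin.snoc_castSucc, Fin.snoc_last]

lemma traj_snoc_of_le (ω : Fin k → Fin m) (i : Fin m) {j : ℕ} (hj : j ≤ k) :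
    traj A b x0 (Fin.snoc ω i : Fin (k + 1) → Fin m) j = traj A b x0 ω j := by
  induction j with
  | zero => rfl
  | succ j ih =>
    have hjk : j < k := hj
    rw [traj, traj, dif_pos (hjk.trans k.lt_succ_self), dif_pos hjk, ih hjk.le]
    exact congrArg₂ _ (Fin.snoc_castSucc (α := fun _ => Fin m) (i := ⟨j, hjk⟩) ..) rfl

lemma traj_snoc_succ (ω : Fin k → Fin m) (i : Fin m) :
    traj A b x0 (Fin.snoc ω i : Fin (k + 1) → Fin m) (k + 1) = proj A b i (traj A b x0 ω k) := by
  rw [traj, dif_pos k.lt_succ_self, traj_snoc_of_le A b x0 ω i le_rfl]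
  exact congrArg₂ _ (Fin.snoc_last (α := fun _ => Fin m) ..) rfl

lemma sum_wt_mul_traj_succ (g : EuclideanSpace ℝ (Fin n) → ℝ) :
    ∑ ω : Fin (k + 1) → Fin m, wt A ω * g (traj A b x0 ω (k + 1))
      = ∑ ω : Fin k → Fin m, wt A ω *
          ∑ i, ‖rowv A i‖ ^ 2 / frobSq A * g (proj A b i (traj A b x0 ω k)) := by
  rw [← Fintype.sum_equiv (Fin.snocEquiv fun _ => Fin m) (fun p => wt A (Fin.snoc p.2 p.1) *
      g (traj A b x0 (Fin.snoc p.2 p.1 : Fin (k + 1) → Fin m) (k + 1))) _ fun _ => rfl,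
    Fintype.sum_prod_type_right]
  simp_rw [wt_snoc, traj_snoc_succ, mul_sum, mul_assoc]

lemma sum_wt_mul_traj_le_pow {g : EuclideanSpace ℝ (Fin n) → ℝ} {q : ℝ} (hq : 0 ≤ q)
    (hstep : ∀ w, ∑ i, ‖rowv A i‖ ^ 2 / frobSq A * g (proj A b i w) ≤ q * g w) :
    ∑ ω : Fin k → Fin m, wt A ω * g (traj A b x0 ω k) ≤ q ^ k * g x0 := by
  induction k with
  | zero => simp [wt, traj]
  | succ k ih =>
    calc ∑ ω : Fin (k + 1) → Fin m, wt A ω * g (traj A b x0 ω (k + 1))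
        ≤ ∑ ω : Fin k → Fin m, wt A ω * (q * g (traj A b x0 ω k)) := by
          rw [sum_wt_mul_traj_succ]
          gcongr with ω
          exacts [wt_nonneg A ω, hstep _]
      _ = q * ∑ ω : Fin k → Fin m, wt A ω * g (traj A b x0 ω k) := by
          rw [mul_sum]
          exact sum_congr rfl fun _ _ => mul_left_comm _ _ _
      _ ≤ q * (q ^ k * g x0) := mul_le_mul_of_nonneg_left ih hq
      _ = q ^ (k + 1) * g x0 := by ring

end Expectation

theorem strohmer_vershynin_general {m n : ℕ} (A : Matrix (Fin m) (Fin n) ℝ) (x : EuclideanSpace ℝ (Fin n))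
    (b : EuclideanSpace ℝ (Fin m)) (hAx : mulV A x = b)
    (σ : ℝ) (hσ : 0 < σ) (hlow : ∀ v : EuclideanSpace ℝ (Fin n), σ * ‖v‖ ≤ ‖mulV A v‖)
    (x0 : EuclideanSpace ℝ (Fin n)) (k : ℕ) :
    ∑ ω : Fin k → Fin m, wt A ω * ‖traj A b x0 ω k - x‖ ^ 2 ≤
      (1 - σ ^ 2 / frobSq A) ^ k * ‖x0 - x‖ ^ 2 := by
  rcases subsingleton_or_nontrivial (EuclideanSpace ℝ (Fin n)) with hE | hE
  · simp [Subsingleton.elim _ (0 : EuclideanSpace ℝ (Fin n))]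
  obtain ⟨v, hv⟩ := exists_ne (0 : EuclideanSpace ℝ (Fin n))
  have hσF : σ ^ 2 ≤ frobSq A := sq_le_frobSq_of_le_norm_mulV A hσ.le hlow hv
  have hF : 0 < frobSq A := (pow_pos hσ 2).trans_le hσF
  have hq : 0 ≤ 1 - σ ^ 2 / frobSq A := sub_nonneg.mpr ((div_le_one hF).mpr hσF)
  exact sum_wt_mul_traj_le_pow A b x0 (g := fun w => ‖w - x‖ ^ 2) hq
    (sum_weighted_norm_proj_sub_sq_le hAx hσ.le hlow hF)

/-- **Strohmer–Vershynin convergence bound.** If `σ > 0` satisfies `‖Av‖ ≥ σ‖v‖` for all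
`v`, then the random Kaczmarz process satisfies
`E ‖x_k − x‖² ≤ (1 − σ²/‖A‖_F²)^k ‖x₀ − x‖²`. -/
theorem strohmer_vershynin {m n : ℕ} (A : Matrix (Fin m) (Fin n) ℝ) (hmn : m ≥ n)
    (hrows : ∀ i, rowv A i ≠ 0) (x : EuclideanSpace ℝ (Fin n))
    (b : EuclideanSpace ℝ (Fin m)) (hAx : mulV A x = b)
    (σ : ℝ) (hσ : 0 < σ) (hlow : ∀ v : EuclideanSpace ℝ (Fin n), σ * ‖v‖ ≤ ‖mulV A v‖)
    (x0 : EuclideanSpace ℝ (Fin n)) (k : ℕ) :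
    ∑ ω : Fin k → Fin m, wt A ω * ‖traj A b x0 ω k - x‖ ^ 2 ≤
      (1 - σ ^ 2 / frobSq A) ^ k * ‖x0 - x‖ ^ 2 :=
  strohmer_vershynin_general A x b hAx σ hσ hlow x0 k
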